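/- arXiv:1903.08120 — 8 statements merged into one kernel-verified Lean document; each statement's English description precedes it below -/
import Mathlib

section
/- The metric F(S) = tr((W(S) + εI)^{-1}) is strictly decreasing in S: for any S₁ ⊊ S₂ ⊆ V, F(S₁) > F(S₂), where W(S) = Σ_{ω∈S} W_ω with each W_ω a nonzero positive semidefinite matrix. -/
/-!
Enlarging `S₁` to `S₂` adds the nonzero positive semidefinite matrix `D = W(S₂ \ S₁)` to the
positive definite matrix `A = W(S₁) + εI`. The identity
`A⁻¹ - (A + D)⁻¹ = (A + D)⁻¹ (D + D A⁻¹ D) (A + D)⁻¹` exhibits `A⁻¹ - (A + D)⁻¹` as a congruence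
of a positive semidefinite matrix, and it is nonzero because inversion is injective; a nonzero
positive semidefinite matrix has positive trace.
-/

open Matrix
open scoped ComplexOrder

namespace Matrix

theorem inv_sub_inv_add {m K : Type*} [Fintype m] [DecidableEq m] [CommRing K]
    {A D : Matrix m m K} (hA : IsUnit A) (hB : IsUnit (A + D)) :
    A⁻¹ - (A + D)⁻¹ = (A + D)⁻¹ * (D + D * A⁻¹ * D) * (A + D)⁻¹ := by
  set B := A + D
  rw [isUnit_iff_isUnit_det] at hA hB
  have hD : D = B - A := by simp [B]
  have hBAB : D + D * A⁻¹ * D = B * A⁻¹ * B - B := by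
    rw [hD]
    simp only [sub_mul, mul_sub, mul_nonsing_inv A hA, nonsing_inv_mul A hA, one_mul, mul_one,
      Matrix.mul_assoc]
    abel
  rw [hBAB]
  simp only [sub_mul, mul_sub, ← Matrix.mul_assoc, nonsing_inv_mul B hB, one_mul]
  simp only [Matrix.mul_assoc, mul_nonsing_inv B hB, mul_one]

variable {m 𝕜 : Type*} [Fintype m] [RCLike 𝕜]

theorem PosSemidef.trace_pos {A : Matrix m m 𝕜} (hA : A.PosSemidef) (h0 : A ≠ 0) :
    0 < A.trace :=
  hA.trace_nonneg.lt_of_ne' (mt hA.trace_eq_zero_iff.mp h0)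

theorem PosSemidef.sum_ne_zero {ι : Type*} {s : Finset ι} {f : ι → Matrix m m 𝕜}
    (hf : ∀ i ∈ s, (f i).PosSemidef) {i : ι} (hi : i ∈ s) (hfi : f i ≠ 0) :
    ∑ j ∈ s, f j ≠ 0 := by
  intro h
  have hle := Finset.single_le_sum (fun j hj ↦ (hf j hj).trace_nonneg) hi
  rw [← trace_sum, h, trace_zero] at hle
  exact ((hf i hi).trace_pos hfi).not_ge hle

variable [DecidableEq m]

theorem PosDef.posSemidef_inv_sub_inv_add {A D : Matrix m m 𝕜} (hA : A.PosDef)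
    (hD : D.PosSemidef) : (A⁻¹ - (A + D)⁻¹).PosSemidef := by
  have hB := hA.add_posSemidef hD
  rw [inv_sub_inv_add hA.isUnit hB.isUnit]
  have hM : (D + D * A⁻¹ * D).PosSemidef := by
    simpa [hD.isHermitian.eq] using hD.add (hA.inv.posSemidef.conjTranspose_mul_mul_same D)
  simpa [hB.inv.isHermitian.eq] using hM.conjTranspose_mul_mul_same (A + D)⁻¹

theorem PosDef.trace_inv_add_lt {A D : Matrix m m 𝕜} (hA : A.PosDef) (hD : D.PosSemidef)
    (hD0 : D ≠ 0) : (A + D)⁻¹.trace < A⁻¹.trace := by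
  have hne : A⁻¹ - (A + D)⁻¹ ≠ 0 := fun h ↦ hD0 <| by
    simpa using (inv_inj (sub_eq_zero.mp h) (A.isUnit_iff_isUnit_det.mp hA.isUnit)).symm
  simpa [trace_sub] using (hA.posSemidef_inv_sub_inv_add hD).trace_pos hne

end Matrix

theorem metric_strictly_decreasing_general {V : Type*} {n : ℕ}
    (W : V → Matrix (Fin n) (Fin n) ℝ)
    (hW : ∀ ω : V, (W ω).PosSemidef) (hW0 : ∀ ω : V, W ω ≠ 0)
    (ε : ℝ) (hε : 0 < ε)
    (F : Finset V → ℝ)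
    (hF : ∀ S : Finset V, F S = ((∑ ω ∈ S, W ω) + ε • (1 : Matrix (Fin n) (Fin n) ℝ))⁻¹.trace)
    (S₁ S₂ : Finset V) (h : S₁ ⊂ S₂) :
    F S₂ < F S₁ := by
  classical
  have hA : ((∑ ω ∈ S₁, W ω) + ε • (1 : Matrix (Fin n) (Fin n) ℝ)).PosDef :=
    PosDef.posSemidef_add (posSemidef_sum S₁ fun ω _ ↦ hW ω) (PosDef.one.smul hε)
  obtain ⟨ω, hω₂, hω₁⟩ := Finset.exists_of_ssubset h
  have hD : ∑ ω ∈ S₂ \ S₁, W ω ≠ 0 :=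
    PosSemidef.sum_ne_zero (fun ω _ ↦ hW ω) (Finset.mem_sdiff.mpr ⟨hω₂, hω₁⟩) (hW0 ω)
  have hsplit : (∑ ω ∈ S₂, W ω) + ε • 1 = ((∑ ω ∈ S₁, W ω) + ε • 1) + ∑ ω ∈ S₂ \ S₁, W ω := by
    rw [← Finset.sum_sdiff h.subset]
    abel
  rw [hF, hF, hsplit]
  exact hA.trace_inv_add_lt (posSemidef_sum _ fun ω _ ↦ hW ω) hD

/-- The metric `F S = tr((W(S) + εI)⁻¹)` is strictly decreasing in `S`. -/
theorem metric_strictly_decreasing {V : Type*} [Fintype V] [DecidableEq V] {n : ℕ}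
    (W : V → Matrix (Fin n) (Fin n) ℝ)
    (hW : ∀ ω : V, (W ω).PosSemidef) (hW0 : ∀ ω : V, W ω ≠ 0)
    (ε : ℝ) (hε : 0 < ε)
    (F : Finset V → ℝ)
    (hF : ∀ S : Finset V, F S = ((∑ ω ∈ S, W ω) + ε • (1 : Matrix (Fin n) (Fin n) ℝ))⁻¹.trace)
    (S₁ S₂ : Finset V) (h : S₁ ⊂ S₂) :
    F S₂ < F S₁ :=
  metric_strictly_decreasing_general W hW hW0 ε hε F hF S₁ S₂ h
end

section
/- If f is nondecreasing and γ-submodular (γ·(f(S∪U∪{ω}) − f(S∪U)) ≤ f(S∪{ω}) − f(S) for all S, U ⊆ V, ω ∈ V), then for all S, U ⊆ V: γ·(f(S∪U) − f(S)) ≤ Σ_{ω∈U\S} (f(S∪{ω}) − f(S)). -/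
/-! Induction on `U`: adding `ω ∉ S` to `U` raises the left side by `γ · ρ_ω(S ∪ U)`, which the
elementwise inequality bounds by the new summand `ρ_ω(S)`; adding `ω ∈ S` changes neither side. -/

theorem weak_submodular_sum_bound_general {V : Type*} [DecidableEq V]
    (f : Finset V → ℝ) (γ : ℝ)
    (hsub : ∀ (S U : Finset V) (ω : V),
      γ * (f (insert ω (S ∪ U)) - f (S ∪ U)) ≤ f (insert ω S) - f S) :
    ∀ S U : Finset V,
      γ * (f (S ∪ U) - f S) ≤ ∑ ω ∈ U \ S, (f (insert ω S) - f S) := by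
  intro S U
  induction U using Finset.induction with
  | empty => simp
  | @insert a T haT ih =>
    by_cases haS : a ∈ S
    · rwa [Finset.union_insert, Finset.insert_eq_of_mem (Finset.mem_union_left T haS),
        Finset.insert_sdiff_of_mem T haS]
    · have ha : a ∉ T \ S := fun h => haT (Finset.mem_sdiff.1 h).1
      rw [Finset.union_insert, Finset.insert_sdiff_of_notMem T haS, Finset.sum_insert ha]
      linear_combination hsub S T a + ih

/-- If `f` is nondecreasing and `γ`-submodular (elementwise definition), then
`γ·(f(S∪U) − f(S)) ≤ Σ_{ω ∈ U\S} (f(S∪{ω}) − f(S))` for all `S, U`. -/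
theorem weak_submodular_sum_bound {V : Type*} [Fintype V] [DecidableEq V]
    (f : Finset V → ℝ) (γ : ℝ) (hγ0 : 0 ≤ γ) (hγ1 : γ ≤ 1)
    (hmono : ∀ S₁ S₂ : Finset V, S₁ ⊆ S₂ → f S₁ ≤ f S₂)
    (hsub : ∀ (S U : Finset V) (ω : V),
      γ * (f (insert ω (S ∪ U)) - f (S ∪ U)) ≤ f (insert ω S) - f S) :
    ∀ S U : Finset V,
      γ * (f (S ∪ U) - f S) ≤ ∑ ω ∈ U \ S, (f (insert ω S) - f S) :=
  weak_submodular_sum_bound_general f γ hsub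
end

section
/- The submodularity ratio γ₁ from the elementwise definition (γ·ρ_ω(S∪U) ≤ ρ_ω(S) for all S,U,ω) is at most the submodularity ratio γ₂ from the sum definition (γ·ρ_U(S) ≤ Σ_{ω∈U\S} ρ_ω(S) for all S,U), for any nondecreasing set function f. -/
/-!
Adding the elements of `U` to `S` one at a time telescopes `f (S ∪ U) - f S` into a sum of
marginal gains at supersets of `S`; the elementwise ratio bounds `γ₁` times each of them by the
corresponding gain at `S` itself, so `γ₁` satisfies the sum inequalities and is at most their
largest solution `γ₂`.
-/

theorem mul_sub_union_le_sum_sub_insert {α R : Type*} [DecidableEq α] [CommRing R]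
    [PartialOrder R] [IsOrderedAddMonoid R] (f : Finset α → R) (γ : R) (S : Finset α)
    (h : ∀ (T : Finset α) (ω : α),
      γ * (f (insert ω (S ∪ T)) - f (S ∪ T)) ≤ f (insert ω S) - f S)
    (T : Finset α) :
    γ * (f (S ∪ T) - f S) ≤ ∑ ω ∈ T, (f (insert ω S) - f S) := by
  induction T using Finset.induction with
  | empty => simp
  | @insert a T ha ih =>
    calc γ * (f (S ∪ insert a T) - f S)
        = γ * (f (insert a (S ∪ T)) - f (S ∪ T)) + γ * (f (S ∪ T) - f S) := by
          rw [Finset.union_insert]; ring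
      _ ≤ (f (insert a S) - f S) + ∑ ω ∈ T, (f (insert ω S) - f S) := add_le_add (h T a) ih
      _ = ∑ ω ∈ insert a T, (f (insert ω S) - f S) := by rw [Finset.sum_insert ha]

theorem elementwise_ratio_le_sum_ratio_general {V : Type*} [DecidableEq V]
    (f : Finset V → ℝ)
    (γ₁ γ₂ : ℝ) (hγ₁0 : 0 ≤ γ₁)
    (hγ₁ : ∀ (S U : Finset V) (ω : V),
      γ₁ * (f (insert ω (S ∪ U)) - f (S ∪ U)) ≤ f (insert ω S) - f S)
    (hγ₂max : ∀ γ : ℝ, 0 ≤ γ →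
      (∀ S U : Finset V,
        γ * (f (S ∪ U) - f S) ≤ ∑ ω ∈ U \ S, (f (insert ω S) - f S)) → γ ≤ γ₂) :
    γ₁ ≤ γ₂ := by
  refine hγ₂max γ₁ hγ₁0 fun S U => ?_
  simpa only [Finset.union_sdiff_self_eq_union] using
    mul_sub_union_le_sum_sub_insert f γ₁ S (hγ₁ S) (U \ S)

/-- The elementwise submodularity ratio `γ₁` is at most the sum-based
submodularity ratio `γ₂`, for any nondecreasing set function. -/
theorem elementwise_ratio_le_sum_ratio {V : Type*} [Fintype V] [DecidableEq V]
    (f : Finset V → ℝ)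
    (hmono : ∀ S₁ S₂ : Finset V, S₁ ⊆ S₂ → f S₁ ≤ f S₂)
    (γ₁ γ₂ : ℝ) (hγ₁0 : 0 ≤ γ₁) (hγ₂0 : 0 ≤ γ₂)
    (hγ₁ : ∀ (S U : Finset V) (ω : V),
      γ₁ * (f (insert ω (S ∪ U)) - f (S ∪ U)) ≤ f (insert ω S) - f S)
    (hγ₁max : ∀ γ : ℝ, 0 ≤ γ →
      (∀ (S U : Finset V) (ω : V),
        γ * (f (insert ω (S ∪ U)) - f (S ∪ U)) ≤ f (insert ω S) - f S) → γ ≤ γ₁)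
    (hγ₂ : ∀ S U : Finset V,
      γ₂ * (f (S ∪ U) - f S) ≤ ∑ ω ∈ U \ S, (f (insert ω S) - f S))
    (hγ₂max : ∀ γ : ℝ, 0 ≤ γ →
      (∀ S U : Finset V,
        γ * (f (S ∪ U) - f S) ≤ ∑ ω ∈ U \ S, (f (insert ω S) - f S)) → γ ≤ γ₂) :
    γ₁ ≤ γ₂ :=
  elementwise_ratio_le_sum_ratio_general f γ₁ γ₂ hγ₁0 hγ₁ hγ₂max
end

section
/- Given real numbers ρ₀ ≥ 0, ..., ρ_{K−1} ≥ 0, the linear program maximizing Σ_{i=1}^{K} ρ_{i−1} s_{i−1} subject to Σ_{i=1}^{t} s_{i−1} ≤ t for all t = 1,…,K and s_{i−1} ≥ 0, has optimal value at most Σ_{t=1}^{K} max_{j ≥ t} ρ_{j−1}. -/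
/-!
Let `M t = max_{t ≤ j < K} ρ j` be the suffix maxima. Since `ρ ≤ M` and `s ≥ 0`, the objective is at
most `Σ M i s i`. The weights `M` are nonincreasing and nonnegative, and the partial sums of `s` are
dominated by those of the constant sequence `1`, so Abel summation gives `Σ M i s i ≤ Σ M i`.
-/

open Finset

theorem sum_mul_le_sum_mul_of_partialSums_le {R : Type*} [CommRing R] [PartialOrder R]
    [IsOrderedRing R] {n : ℕ} {w a b : ℕ → R} (hw : AntitoneOn w (Set.Iio n))
    (hw₀ : ∀ i < n, 0 ≤ w i) (hab : ∀ t ≤ n, ∑ i ∈ range t, a i ≤ ∑ i ∈ range t, b i) :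
    ∑ i ∈ range n, w i * a i ≤ ∑ i ∈ range n, w i * b i := by
  induction n generalizing w with
  | zero => simp
  | succ n ih =>
    have hwn : ∀ i < n, w n ≤ w i := fun i hi =>
      hw (Set.mem_Iio.2 (by omega)) (Set.mem_Iio.2 n.lt_succ_self) hi.le
    have split : ∀ c : ℕ → R, ∑ i ∈ range (n + 1), w i * c i =
        ∑ i ∈ range n, (w i - w n) * c i + w n * ∑ i ∈ range (n + 1), c i := by
      intro c
      simp only [sum_range_succ, sub_mul, sum_sub_distrib, mul_add, mul_sum]
      ring
    rw [split a, split b]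
    gcongr ?_ + ?_
    · refine ih (fun i hi j hj hij => sub_le_sub_right (hw ?_ ?_ hij) _)
        (fun i hi => sub_nonneg.2 (hwn i hi)) (fun t ht => hab t (by omega))
      · exact Set.mem_Iio.2 (Nat.lt_succ_of_lt hi)
      · exact Set.mem_Iio.2 (Nat.lt_succ_of_lt hj)
    · exact mul_le_mul_of_nonneg_left (hab _ le_rfl) (hw₀ n n.lt_succ_self)

noncomputable def suffixMax (ρ : ℕ → ℝ) (K t : ℕ) : ℝ :=
  if h : t < K then (Ico t K).sup' (nonempty_Ico.2 h) ρ else 0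

section suffixMax

variable {ρ : ℕ → ℝ} {K : ℕ}

theorem suffixMax_of_lt {t : ℕ} (h : t < K) :
    suffixMax ρ K t = (Ico t K).sup' (nonempty_Ico.2 h) ρ :=
  dif_pos h

theorem le_suffixMax {i : ℕ} (hi : i < K) : ρ i ≤ suffixMax ρ K i := by
  rw [suffixMax_of_lt hi]
  exact le_sup' ρ (mem_Ico.2 ⟨le_rfl, hi⟩)

theorem suffixMax_antitoneOn : AntitoneOn (suffixMax ρ K) (Set.Iio K) := by
  intro i hi j hj hij
  rw [suffixMax_of_lt hi, suffixMax_of_lt hj]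
  exact sup'_mono ρ (Ico_subset_Ico_left hij) _

end suffixMax

/-- The LP maximizing `Σ ρ_{i-1} s_{i-1}` under the partial-sum constraints
`Σ_{i=1}^t s_{i-1} ≤ t` has optimal value at most the sum of suffix maxima of `ρ`. -/
theorem lp_value_le_suffix_maxima (K : ℕ) (ρ s : ℕ → ℝ)
    (hρ : ∀ i < K, 0 ≤ ρ i) (hs : ∀ i < K, 0 ≤ s i)
    (hsum : ∀ t, 1 ≤ t → t ≤ K → ∑ i ∈ Finset.range t, s i ≤ (t : ℝ)) :
    ∑ i ∈ Finset.range K, ρ i * s i ≤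
      ∑ t ∈ (Finset.range K).attach,
        (Finset.Ico t.1 K).sup' (by
          exact Finset.nonempty_Ico.mpr (Finset.mem_range.mp t.2)) ρ := by
  have partialSums_le : ∀ t ≤ K, ∑ i ∈ range t, s i ≤ ∑ _i ∈ range t, (1 : ℝ) := by
    intro t ht
    rcases Nat.eq_zero_or_pos t with rfl | ht₁
    · simp
    · simpa using hsum t ht₁ ht
  calc ∑ i ∈ range K, ρ i * s i
      ≤ ∑ i ∈ range K, suffixMax ρ K i * s i :=
        sum_le_sum fun i hi =>
          mul_le_mul_of_nonneg_right (le_suffixMax (mem_range.1 hi)) (hs i (mem_range.1 hi))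
    _ ≤ ∑ i ∈ range K, suffixMax ρ K i * 1 :=
        sum_mul_le_sum_mul_of_partialSums_le suffixMax_antitoneOn
          (fun i hi => (hρ i hi).trans (le_suffixMax hi)) partialSums_le
    _ = _ := by
        rw [← sum_attach]
        exact sum_congr rfl fun t _ => by rw [mul_one, suffixMax_of_lt (mem_range.1 t.2)]
end

section
/- If nonnegative reals s₀,…,s_{K−1} satisfy Σ_{i=1}^{t} s_{i−1} ≤ t for all t ≤ K, and ρ₀,…,ρ_{K−1} ≥ 0 satisfy ρ_{i₂} ≤ γ^{-1} ρ_{i₁} for all i₁ < i₂ (for γ ∈ (0,1]), then Σ_{i=1}^{K} ρ_{i−1} s_{i−1} ≤ γ^{-1} Σ_{i=1}^{K} ρ_{i−1}. -/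
/-- If nonnegative `s` satisfies the partial-sum constraints and `ρ` is
approximately decreasing (`ρ_j ≤ γ⁻¹ ρ_i` for `i < j`), then
`Σ ρ_{i-1} s_{i-1} ≤ γ⁻¹ Σ ρ_{i-1}`. -/
theorem weighted_sum_le_inv_gamma_sum (K : ℕ) (hK : 0 < K) (γ : ℝ)
    (hγ0 : 0 < γ) (hγ1 : γ ≤ 1) (ρ s : ℕ → ℝ)
    (hρ : ∀ i < K, 0 ≤ ρ i) (hs : ∀ i < K, 0 ≤ s i)
    (hsum : ∀ t, 1 ≤ t → t ≤ K → ∑ i ∈ Finset.range t, s i ≤ (t : ℝ))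
    (hdec : ∀ i j, i < j → j < K → ρ j ≤ γ⁻¹ * ρ i) :
    ∑ i ∈ Finset.range K, ρ i * s i ≤ γ⁻¹ * ∑ i ∈ Finset.range K, ρ i := by
  have hγinv1 : (1:ℝ) ≤ γ⁻¹ := (one_le_inv₀ hγ0).mpr hγ1
  have hγinv0 : (0:ℝ) ≤ γ⁻¹ := by positivity
  set m : ℕ → ℝ := fun i => γ⁻¹ * (Finset.range (i+1)).inf' (by simp) ρ with hm
  have hmono : ∀ i j : ℕ, i ≤ j → m j ≤ m i := by
    intro i j hij
    apply mul_le_mul_of_nonneg_left _ hγinv0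
    exact Finset.inf'_mono _ (Finset.range_subset_range.2 (by omega)) _
  have hle : ∀ i < K, ρ i ≤ m i := by
    intro i hi
    obtain ⟨j, hj, hjeq⟩ := Finset.exists_mem_eq_inf' (s := Finset.range (i+1))
      (by simp) ρ
    simp only [Finset.mem_range] at hj
    rcases lt_or_eq_of_le (Nat.lt_succ_iff.mp hj) with h | h
    · have := hdec j i h hi
      simp only [hm]; rw [hjeq]; exact this
    · subst h
      simp only [hm]; rw [hjeq]
      nlinarith [hρ j hi]
  have hmle : ∀ i < K, m i ≤ γ⁻¹ * ρ i := by
    intro i hi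
    exact mul_le_mul_of_nonneg_left
      (Finset.inf'_le _ (Finset.self_mem_range_succ i)) hγinv0
  have hm0 : ∀ i < K, 0 ≤ m i := by
    intro i hi
    obtain ⟨j, hj, hjeq⟩ := Finset.exists_mem_eq_inf' (s := Finset.range (i+1))
      (by simp) ρ
    simp only [Finset.mem_range] at hj
    have hjK : j < K := by omega
    simp only [hm]; rw [hjeq]
    exact mul_nonneg hγinv0 (hρ j hjK)
  have key : ∀ t, 1 ≤ t → t ≤ K →
      ∑ i ∈ Finset.range t, m i * s i
        + m (t-1) * ((t:ℝ) - ∑ i ∈ Finset.range t, s i)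
        ≤ ∑ i ∈ Finset.range t, m i := by
    intro t ht
    induction t, ht using Nat.le_induction with
    | base =>
      intro _
      simp only [Finset.sum_range_one, Nat.cast_one]
      have : m 0 * s 0 + m (1-1) * (1 - s 0) = m 0 := by norm_num; ring
      linarith
    | succ n hn ih =>
      intro hnK
      have hnK' : n ≤ K := by omega
      have hnltK : n < K := by omega
      have ihn := ih hnK'
      have hSn : ∑ i ∈ Finset.range n, s i ≤ (n:ℝ) := hsum n hn hnK'
      rw [Finset.sum_range_succ (f := fun i => m i * s i),
          Finset.sum_range_succ (f := s), Finset.sum_range_succ (f := m)]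
      have h1 : m n * s n + m n * ((n+1:ℕ) - (∑ i ∈ Finset.range n, s i + s n))
          = m n + m n * ((n:ℝ) - ∑ i ∈ Finset.range n, s i) := by
        push_cast; ring
      have h2 : m n * ((n:ℝ) - ∑ i ∈ Finset.range n, s i)
          ≤ m (n-1) * ((n:ℝ) - ∑ i ∈ Finset.range n, s i) := by
        apply mul_le_mul_of_nonneg_right (hmono (n-1) n (by omega)) (by linarith)
      have hidx : n + 1 - 1 = n := rfl
      rw [hidx]
      linarith
  have step1 : ∑ i ∈ Finset.range K, ρ i * s i ≤ ∑ i ∈ Finset.range K, m i * s i := by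
    apply Finset.sum_le_sum
    intro i hi
    simp only [Finset.mem_range] at hi
    exact mul_le_mul_of_nonneg_right (hle i hi) (hs i hi)
  have step2 : ∑ i ∈ Finset.range K, m i * s i ≤ ∑ i ∈ Finset.range K, m i := by
    have hk := key K (by omega) le_rfl
    have h1 : 0 ≤ m (K-1) * ((K:ℝ) - ∑ i ∈ Finset.range K, s i) :=
      mul_nonneg (hm0 (K-1) (by omega)) (by linarith [hsum K (by omega) le_rfl])
    linarith
  have step3 : ∑ i ∈ Finset.range K, m i ≤ γ⁻¹ * ∑ i ∈ Finset.range K, ρ i := by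
    rw [Finset.mul_sum]
    apply Finset.sum_le_sum
    intro i hi
    simp only [Finset.mem_range] at hi
    exact hmle i hi
  linarith
end

section
/- Greedy guarantee over a matroid with weakly submodular objective: Let f be nondecreasing and γ-submodular on finite ground set V, M = (V, 𝓕) a matroid whose bases have cardinality K, and let S^G be the output of the greedy algorithm (iteratively adding the feasible element of largest marginal gain). Then f(S^G) − f(∅) ≥ (γ³/(γ³+1))·(f(S*) − f(∅)), where S* is an optimal base. -/
/-- Performance guarantee for the greedy algorithm applied to the maximization of a
nondecreasing `γ`-submodular set function over a matroid whose bases have size `K`: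
`f(S^G) − f(∅) ≥ (γ³/(γ³+1))·(f(S*) − f(∅))`. -/
theorem greedy_guarantee_matroid {V : Type*} [Fintype V] [DecidableEq V]
    (f : Finset V → ℝ) (γ : ℝ) (hγ0 : 0 < γ) (hγ1 : γ ≤ 1)
    -- f is nondecreasing
    (hmono : ∀ S₁ S₂ : Finset V, S₁ ⊆ S₂ → f S₁ ≤ f S₂)
    -- f is γ-submodular (elementwise submodularity ratio)
    (hsub : ∀ (S U : Finset V) (ω : V),
      γ * (f (insert ω (S ∪ U)) - f (S ∪ U)) ≤ f (insert ω S) - f S)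
    -- (V, 𝓕) is a matroid
    (F : Finset V → Prop) (K : ℕ)
    (hFempty : F ∅)
    (hFdown : ∀ S T : Finset V, T ⊆ S → F S → F T)
    (hFexch : ∀ S T : Finset V, F S → F T → S.card < T.card →
      ∃ v ∈ T \ S, F (insert v S))
    -- all bases (maximal independent sets) have cardinality K
    (hFbase : ∀ S : Finset V, F S → (∀ v ∉ S, ¬ F (insert v S)) → S.card = K)
    -- the greedy iterates: at each step add a feasible element of largest marginal gain
    (S : ℕ → Finset V) (hS0 : S 0 = ∅)
    (hgreedy : ∀ t < K, ∃ v ∉ S t,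
      S (t + 1) = insert v (S t) ∧ F (S (t + 1)) ∧
      ∀ w ∉ S t, F (insert w (S t)) → f (insert w (S t)) ≤ f (S (t + 1)))
    -- S* is an optimal base
    (Sstar : Finset V) (hSstar : F Sstar)
    (hopt : ∀ T : Finset V, F T → f T ≤ f Sstar) :
    f (S K) - f ∅ ≥ γ ^ 3 / (γ ^ 3 + 1) * (f Sstar - f ∅) := by
  classical
  -- basic chain facts about the greedy iterates
  have hF : ∀ t ≤ K, F (S t) ∧ (S t).card = t := by
    intro t ht
    induction t with
    | zero => constructor <;> simp [hS0, hFempty]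
    | succ n ih =>
      obtain ⟨hFn, hcard⟩ := ih (Nat.le_of_succ_le ht)
      obtain ⟨v, hv, heq, hFv, _⟩ := hgreedy n (Nat.lt_of_succ_le ht)
      exact ⟨hFv, by rw [heq, Finset.card_insert_of_notMem hv, hcard]⟩
  have hstep : ∀ t < K, S t ⊆ S (t + 1) := by
    intro t ht
    obtain ⟨v, hv, heq, _, _⟩ := hgreedy t ht
    rw [heq]; exact Finset.subset_insert _ _
  have hmonoS : ∀ m t, t + m ≤ K → S t ⊆ S (t + m) := by
    intro m
    induction m with
    | zero => intro t _; simp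
    | succ n ih =>
      intro t h
      have h1 : S t ⊆ S (t + n) := ih t (by omega)
      have h2 : S (t + n) ⊆ S (t + n + 1) := hstep (t + n) (by omega)
      exact h1.trans h2
  have hsubK : ∀ t ≤ K, S t ⊆ S K := by
    intro t ht
    have := hmonoS (K - t) t (by omega)
    rwa [Nat.add_sub_cancel' ht] at this
  -- extend Sstar to a base B of cardinality K
  obtain ⟨B, hBs, hBmax⟩ := Finset.exists_max_image
    (Finset.univ.powerset.filter (fun T => Sstar ⊆ T ∧ F T)) Finset.card
    ⟨Sstar, by simp [hSstar]⟩
  simp only [Finset.mem_filter, Finset.mem_powerset] at hBs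
  obtain ⟨-, hSB, hFB⟩ := hBs
  have hBK : B.card = K := by
    refine hFbase B hFB (fun v hv hfv => ?_)
    have hmem : insert v B ∈ Finset.univ.powerset.filter (fun T => Sstar ⊆ T ∧ F T) := by
      simp only [Finset.mem_filter, Finset.mem_powerset]
      exact ⟨Finset.subset_univ _, hSB.trans (Finset.subset_insert _ _), hfv⟩
    have := hBmax _ hmem
    rw [Finset.card_insert_of_notMem hv] at this
    omega
  -- marginal gains with respect to the greedy output
  set ρ : V → ℝ := fun a => f (insert a (S K)) - f (S K) with hρ
  -- telescoping: γ·(f(S_K ∪ U) − f(S_K)) ≤ ∑_{a∈U} ρ a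
  have htel : ∀ U : Finset V, γ * (f (S K ∪ U) - f (S K)) ≤ ∑ a ∈ U, ρ a := by
    intro U
    induction U using Finset.induction_on with
    | empty => simp
    | insert _ _ ha =>
      rename_i a U ih
      rw [Finset.union_insert, Finset.sum_insert ha]
      have h1 := hsub (S K) U a
      have hexp : γ * (f (insert a (S K ∪ U)) - f (S K)) =
          γ * (f (insert a (S K ∪ U)) - f (S K ∪ U)) + γ * (f (S K ∪ U) - f (S K)) := by ring
      rw [hexp]
      have : ρ a = f (insert a (S K)) - f (S K) := rfl
      linarith
  -- the key downward induction building the assignment between B and greedy steps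
  have hQ : ∀ d ≤ K, ∃ R, R ⊆ B ∧ R.card = K - d ∧
      γ * ∑ a ∈ B \ R, ρ a ≤ f (S K) - f (S (K - d)) := by
    intro d
    induction d with
    | zero =>
      intro _
      exact ⟨B, Finset.Subset.refl B, by omega, by simp⟩
    | succ n ih =>
      intro h
      obtain ⟨R, hRB, hRcard, hRsum⟩ := ih (Nat.le_of_succ_le h)
      set t := K - (n + 1) with htdef
      have htK : t < K := by omega
      have htn : K - n = t + 1 := by omega
      obtain ⟨hFt, hcardt⟩ := hF t htK.le
      have hFR : F R := hFdown B R hRB hFB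
      have hlt : (S t).card < R.card := by rw [hcardt, hRcard]; omega
      obtain ⟨v, hvmem, hFiv⟩ := hFexch (S t) R hFt hFR hlt
      rw [Finset.mem_sdiff] at hvmem
      obtain ⟨w, hw, heq, hFw, hbest⟩ := hgreedy t htK
      have hfv : f (insert v (S t)) ≤ f (S (t + 1)) := hbest v hvmem.2 hFiv
      have hρv : γ * ρ v ≤ f (S (t + 1)) - f (S t) := by
        have h2 := hsub (S t) (S K) v
        rw [Finset.union_eq_right.mpr (hsubK t htK.le)] at h2
        have h3 : γ * ρ v = γ * (f (insert v (S K)) - f (S K)) := rfl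
        rw [h3]; linarith
      have hvB : v ∈ B := hRB hvmem.1
      refine ⟨R.erase v, (Finset.erase_subset _ _).trans hRB,
        by rw [Finset.card_erase_of_mem hvmem.1, hRcard]; omega, ?_⟩
      have hsd : B \ R.erase v = insert v (B \ R) := by
        ext x
        simp only [Finset.mem_sdiff, Finset.mem_erase, Finset.mem_insert]
        by_cases hx : x = v
        · subst hx; simp [hvB, hvmem.1]
        · tauto
      have hvnot : v ∉ B \ R := by simp [hvmem.1]
      rw [hsd, Finset.sum_insert hvnot, mul_add]
      rw [htn] at hRsum
      linarith
  -- specialize to d = K : γ·∑_{a∈B} ρ a ≤ f(S_K) − f(∅)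
  obtain ⟨R0, -, hR0card, hR0⟩ := hQ K le_rfl
  have hR0e : R0 = ∅ := Finset.card_eq_zero.mp (by omega)
  rw [hR0e, Finset.sdiff_empty, Nat.sub_self, hS0] at hR0
  -- combine
  have hBsum := htel B
  have hfB : f B ≤ f (S K ∪ B) := hmono _ _ Finset.subset_union_right
  have hSopt : f Sstar ≤ f B := hmono _ _ hSB
  have hA0 : 0 ≤ f (S K) - f ∅ := by
    have := hmono ∅ (S K) (Finset.empty_subset _); linarith
  have hc : γ ^ 2 * (f B - f (S K)) ≤ f (S K) - f ∅ := by
    have k1 : γ * (γ * (f (S K ∪ B) - f (S K))) ≤ γ * ∑ a ∈ B, ρ a :=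
      mul_le_mul_of_nonneg_left hBsum hγ0.le
    nlinarith [mul_le_mul_of_nonneg_left hfB (sq_nonneg γ)]
  have hd : (0:ℝ) < γ ^ 3 + 1 := by positivity
  rw [ge_iff_le, div_mul_eq_mul_div, div_le_iff₀ hd]
  have k2 : γ * (γ ^ 2 * (f B - f (S K))) ≤ γ * (f (S K) - f ∅) :=
    mul_le_mul_of_nonneg_left hc hγ0.le
  have k3 : γ ^ 3 * f Sstar ≤ γ ^ 3 * f B :=
    mul_le_mul_of_nonneg_left hSopt (by positivity)
  nlinarith [mul_nonneg (pow_pos hγ0 3).le hA0]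
end

section
/- In the greedy algorithm over a matroid, for each t ∈ {1,…,K}, every independent subset of U^t has cardinality at most t, where U^t is the set of all elements considered (accepted or rejected by the feasibility check) up to and including the t-th accepted element. -/
theorem card_le_card_of_forall_not_indep_insert {V : Type*} [DecidableEq V]
    {F : Finset V → Prop}
    (hFexch : ∀ S T : Finset V, F S → F T → S.card < T.card → ∃ v ∈ T \ S, F (insert v S))
    {I U T : Finset V} (hI : F I) (hmax : ∀ j ∈ U, j ∉ I → ¬ F (insert j I))
    (hTU : T ⊆ U) (hT : F T) : T.card ≤ I.card := by
  by_contra hlt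
  obtain ⟨v, hv, hvI⟩ := hFexch I T hI hT (not_le.mp hlt)
  rw [Finset.mem_sdiff] at hv
  exact hmax v (hTU hv.1) hv.2 hvI

theorem independent_subset_of_examined_card_le_general {V : Type*} [DecidableEq V]
    (F : Finset V → Prop)
    (hFdown : ∀ S T : Finset V, T ⊆ S → F S → F T)
    (hFexch : ∀ S T : Finset V, F S → F T → S.card < T.card →
      ∃ v ∈ T \ S, F (insert v S))
    (t : ℕ) (S : ℕ → Finset V) (U : Finset V)
    (hcard : ∀ i ≤ t, (S i).card = i)
    (hF : ∀ i ≤ t, F (S i))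
    (hchain : ∀ i j, i ≤ j → j ≤ t → S i ⊆ S j)
    -- any examined element outside S t was rejected by the feasibility check
    (hrej : ∀ j ∈ U, j ∉ S t → ∃ t' ≤ t, ¬ F (insert j (S t'))) :
    ∀ T : Finset V, T ⊆ U → F T → T.card ≤ t := by
  intro T hTU hT
  -- a rejection stays valid as `S` grows, since supersets of dependent sets are dependent
  have hmax : ∀ j ∈ U, j ∉ S t → ¬ F (insert j (S t)) := by
    intro j hj hjS hins
    obtain ⟨t', ht', hdep⟩ := hrej j hj hjS
    exact hdep (hFdown _ _ (Finset.insert_subset_insert j (hchain t' t ht' le_rfl)) hins)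
  calc T.card ≤ (S t).card :=
        card_le_card_of_forall_not_indep_insert hFexch (hF t le_rfl) hmax hTU hT
    _ = t := hcard t le_rfl

/-- In the greedy algorithm over a matroid, every independent subset of `U^t`
(the elements examined up to and including the `t`-th accepted element) has
cardinality at most `t`. -/
theorem independent_subset_of_examined_card_le {V : Type*} [DecidableEq V]
    (F : Finset V → Prop)
    (hFdown : ∀ S T : Finset V, T ⊆ S → F S → F T)
    (hFexch : ∀ S T : Finset V, F S → F T → S.card < T.card →
      ∃ v ∈ T \ S, F (insert v S))
    (t : ℕ) (S : ℕ → Finset V) (U : Finset V)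
    (hcard : ∀ i ≤ t, (S i).card = i)
    (hF : ∀ i ≤ t, F (S i))
    (hchain : ∀ i j, i ≤ j → j ≤ t → S i ⊆ S j)
    (hSU : S t ⊆ U)
    -- any examined element outside S t was rejected by the feasibility check
    (hrej : ∀ j ∈ U, j ∉ S t → ∃ t' ≤ t, ¬ F (insert j (S t'))) :
    ∀ T : Finset V, T ⊆ U → F T → T.card ≤ t :=
  independent_subset_of_examined_card_le_general F hFdown hFexch t S U hcard hF hchain hrej
end

section
/- Feasibility check via matchings (Theorem 3, reverse direction): if the maximum matching m* in H_b(S) has size at least n−K, with |S| = k < K, then setting P' ⊆ V'\S' to be the vertices of V'\S' missed by m* (so |P'| ≤ K−k), the set Q = P ∪ S satisfies |Q| ≤ K and m* covers V'\Q' in H_b(Q), i.e., m* is a perfect matching in H_b(Q). -/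
/-- A matching of the bipartite graph with edge set `E`. -/
def IsBipMatching {V1 V2 : Type*} (E : Set (V1 × V2)) (M : Finset (V1 × V2)) : Prop :=
  (↑M : Set (V1 × V2)) ⊆ E ∧
    ∀ e ∈ M, ∀ f ∈ M, e ≠ f → e.1 ≠ f.1 ∧ e.2 ≠ f.2

/-- The auxiliary bipartite graph `H_b(T)`. -/
def Hb {n : ℕ} (E : Set (Fin n × Fin n)) (T : Finset (Fin n)) : Set (Fin n × Fin n) :=
  {e ∈ E | e.2 ∉ T}

/-! `m*` covers `|m*|` vertices of `V' \ S'`, so `|S| + |P| + |m*| = n`; with `|m*| ≥ n - K`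
this gives `|S| + |P| ≤ K`. Every edge of `m*` ends outside `S' ∪ P'`, so `m*` stays a matching
of `H_b(P ∪ S)`, and by construction of `P'` it covers everything outside `P' ∪ S'`. -/

open Finset

section Uncovered

variable {V₁ V₂ : Type*}

theorem IsBipMatching.injOn_snd {E : Set (V₁ × V₂)} {M : Finset (V₁ × V₂)}
    (hM : IsBipMatching E M) : Set.InjOn Prod.snd (M : Set (V₁ × V₂)) := by
  intro e he f hf hef
  by_contra hne
  exact (hM.2 e he f hf hne).2 hef

variable [Fintype V₂] [DecidableEq V₂]

/-- The set `P'` of the paper, for `T = S` and `M = m*`. -/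
def uncovered (T : Finset V₂) (M : Finset (V₁ × V₂)) : Finset V₂ :=
  univ.filter fun j => j ∉ T ∧ ∀ e ∈ M, e.2 ≠ j

theorem uncovered_eq_compl (T : Finset V₂) (M : Finset (V₁ × V₂)) :
    uncovered T M = (T ∪ M.image Prod.snd)ᶜ := by
  ext j
  simp only [uncovered, mem_filter, mem_univ, true_and, mem_compl, mem_union, mem_image, not_or,
    not_exists, not_and]

theorem exists_snd_eq_of_notMem_uncovered_union {T : Finset V₂} {M : Finset (V₁ × V₂)}
    {j : V₂} (hj : j ∉ uncovered T M ∪ T) : ∃ e ∈ M, e.2 = j := by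
  rw [uncovered_eq_compl, mem_union, mem_compl, mem_union, not_or, not_not] at hj
  obtain ⟨hT | hM, hnT⟩ := hj
  · exact absurd hT hnT
  · simpa using hM

theorem card_uncovered_add_card_add_card {E : Set (V₁ × V₂)} {T : Finset V₂}
    {M : Finset (V₁ × V₂)} (hM : IsBipMatching E M) (hT : ∀ e ∈ M, e.2 ∉ T) :
    (uncovered T M).card + (T.card + M.card) = Fintype.card V₂ := by
  have hdisj : Disjoint T (M.image Prod.snd) := by
    rw [disjoint_right]
    intro j hj
    obtain ⟨e, he, rfl⟩ := mem_image.1 hj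
    exact hT e he
  rw [← card_image_of_injOn hM.injOn_snd, ← card_union_of_disjoint hdisj,
    uncovered_eq_compl, card_compl_add_card]

end Uncovered

section Hb

variable {n : ℕ} {E : Set (Fin n × Fin n)} {S : Finset (Fin n)} {M : Finset (Fin n × Fin n)}

theorem snd_notMem_of_isBipMatching_hb (hM : IsBipMatching (Hb E S) M) :
    ∀ e ∈ M, e.2 ∉ S :=
  fun _ he => (hM.1 he).2

theorem IsBipMatching.hb_uncovered_union (hM : IsBipMatching (Hb E S) M) :
    IsBipMatching (Hb E (uncovered S M ∪ S)) M := by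
  refine ⟨fun e he => ⟨(hM.1 he).1, ?_⟩, hM.2⟩
  rw [uncovered_eq_compl, mem_union, mem_compl, not_or, not_not]
  exact ⟨mem_union_right _ (mem_image_of_mem _ he), (hM.1 he).2⟩

end Hb

theorem feasibility_check_reverse_general {n : ℕ} (E : Set (Fin n × Fin n))
    (K k : ℕ) (S : Finset (Fin n)) (hScard : S.card = k)
    (Mstar : Finset (Fin n × Fin n)) (hMstar : IsBipMatching (Hb E S) Mstar)
    (hsize : n - K ≤ Mstar.card) :
    let P : Finset (Fin n) :=
      Finset.univ.filter (fun j => j ∉ S ∧ ∀ e ∈ Mstar, e.2 ≠ j)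
    let Q : Finset (Fin n) := P ∪ S
    P.card ≤ K - k ∧ Q.card ≤ K ∧ IsBipMatching (Hb E Q) Mstar ∧
      ∀ j : Fin n, j ∉ Q → ∃ e ∈ Mstar, e.2 = j := by
  intro P Q
  have hP : P = uncovered S Mstar := by ext; simp [P, uncovered]
  have hQ : Q = uncovered S Mstar ∪ S := hP ▸ rfl
  rw [hQ, hP]
  have hcount := card_uncovered_add_card_add_card hMstar (snd_notMem_of_isBipMatching_hb hMstar)
  rw [Fintype.card_fin] at hcount
  exact ⟨by omega, (card_union_le _ _).trans (by omega), hMstar.hb_uncovered_union,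
    fun _ hj => exists_snd_eq_of_notMem_uncovered_union hj⟩

/-- Theorem 3, reverse direction: if a maximum matching `m*` of `H_b(S)` has size
at least `n − K`, then letting `P` be the vertices of `V' \ S'` missed by `m*`,
the set `Q = P ∪ S` has `|P| ≤ K − k`, `|Q| ≤ K`, and `m*` is a perfect matching
of `H_b(Q)` (a matching covering `V' \ Q'`). -/
theorem feasibility_check_reverse {n : ℕ} (E : Set (Fin n × Fin n))
    (K k : ℕ) (S : Finset (Fin n)) (hScard : S.card = k) (hkK : k < K)
    (Mstar : Finset (Fin n × Fin n)) (hMstar : IsBipMatching (Hb E S) Mstar)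
    (hmax : ∀ M : Finset (Fin n × Fin n), IsBipMatching (Hb E S) M → M.card ≤ Mstar.card)
    (hsize : n - K ≤ Mstar.card) :
    let P : Finset (Fin n) :=
      Finset.univ.filter (fun j => j ∉ S ∧ ∀ e ∈ Mstar, e.2 ≠ j)
    let Q : Finset (Fin n) := P ∪ S
    P.card ≤ K - k ∧ Q.card ≤ K ∧ IsBipMatching (Hb E Q) Mstar ∧
      ∀ j : Fin n, j ∉ Q → ∃ e ∈ Mstar, e.2 = j :=
  feasibility_check_reverse_general E K k S hScard Mstar hMstar hsize
end
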